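/- arXiv:2505.08118 — 3 statements merged into one kernel-verified Lean document; each statement's English description precedes it below -/
import Mathlib

section
/- Let κ be a regular uncountable cardinal, let P be a forcing poset satisfying the κ-chain condition, and let (p_α)_{α<κ} be a κ-sequence of conditions in P. Then there exists α < κ such that p_α forces (in the forcing language of P) that the set {β < κ : p_β ∈ Ġ} is unbounded in κ, where Ġ is the canonical name for the generic filter. -/
/-!
Suppose no `p α` works: each `α < κ` has some `q α ≤ p α` and a bound `η α < κ` such that
`q α` is incompatible with every `p β`, `η α ≤ β < κ`. Take a maximal antichain `A` among the
`q α`. By the `κ`-chain condition `|A| < κ`, so by regularity the bounds `η α` of its members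
are below some `σ < κ`. Maximality makes `q σ` compatible with a member `q α` of `A`, although
`η α ≤ σ` and `q σ ≤ p σ`.
-/

open Cardinal

section Antichain

variable {P : Type*} [Preorder P]

theorem exists_strongAntichain_subset_forall_compatible (S : Set P) :
    ∃ A ⊆ S, IsStrongAntichain (· ≥ ·) A ∧ ∀ x ∈ S, ∃ a ∈ A, ∃ r, r ≤ x ∧ r ≤ a := by
  obtain ⟨A, hA⟩ := zorn_subset {A | A ⊆ S ∧ IsStrongAntichain (· ≥ ·) A} (by
    intro c hc hchain
    refine ⟨⋃₀ c, ⟨Set.sUnion_subset fun A hA => (hc hA).1, ?_⟩,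
      fun _ => Set.subset_sUnion_of_mem⟩
    rintro x ⟨B, hB, hxB⟩ y ⟨C, hC, hyC⟩ hxy
    rcases hchain.total hB hC with h | h
    · exact (hc hC).2 (h hxB) hyC hxy
    · exact (hc hB).2 hxB (h hyC) hxy)
  obtain ⟨hAS, hAanti⟩ := hA.prop
  refine ⟨A, hAS, hAanti, fun x hx => ?_⟩
  by_contra! hincompat
  have hinsert : insert x A ∈ {A | A ⊆ S ∧ IsStrongAntichain (· ≥ ·) A} :=
    ⟨Set.insert_subset hx hAS, hAanti.insert fun a ha _ r => not_and_or.mp fun h =>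
      hincompat a ha r h.1 h.2⟩
  have hxA : x ∈ A := hA.eq_of_subset hinsert (Set.subset_insert x A) ▸ Set.mem_insert x A
  exact hincompat x hxA x le_rfl le_rfl

theorem exists_compatible_of_isRegular {κ : Cardinal} (hκ : κ.IsRegular)
    (hcc : ∀ A : Set P, IsStrongAntichain (· ≥ ·) A → #A < κ)
    (q : Ordinal → P) (η : Ordinal → Ordinal) (hη : ∀ α < κ.ord, η α < κ.ord) :
    ∃ α < κ.ord, ∃ β, η α ≤ β ∧ β < κ.ord ∧ ∃ r, r ≤ q α ∧ r ≤ q β := by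
  obtain ⟨A, hAS, hAanti, hAmax⟩ :=
    exists_strongAntichain_subset_forall_compatible (q '' Set.Iio κ.ord)
  choose idx hidx hqidx using fun a : A => hAS a.2
  set σ := ⨆ a : A, η (idx a)
  have hσ : σ < κ.ord :=
    Ordinal.iSup_lt_of_lt_cof (hκ.cof_ord.symm ▸ hcc A hAanti) fun a => hη _ (hidx a)
  obtain ⟨a, ha, r, hrσ, hra⟩ := hAmax (q σ) ⟨σ, hσ, rfl⟩
  have hησ : η (idx ⟨a, ha⟩) ≤ σ := Ordinal.le_iSup (fun a : A => η (idx a)) ⟨a, ha⟩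
  exact ⟨idx ⟨a, ha⟩, hidx _, σ, hησ, hσ, r, hqidx _ ▸ hra, hrσ⟩

end Antichain

/-- The forcing relation `p α ⊩ "{β < κ | p β ∈ Ġ} is unbounded"` is unfolded into density:
below every `q ≤ p α` and above every `η < κ` some `r ≤ q` extends some `p β` with `η ≤ β`. -/
theorem stmt0_general {P : Type} [Preorder P]
    (κ : Cardinal) (hκreg : κ.IsRegular)
    (hcc : ∀ A : Set P,
      (∀ p ∈ A, ∀ q ∈ A, p ≠ q → ¬ ∃ r : P, r ≤ p ∧ r ≤ q) → Cardinal.mk A < κ)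
    (p : Ordinal → P) :
    ∃ α : Ordinal, α < κ.ord ∧
      ∀ q : P, q ≤ p α → ∀ η : Ordinal, η < κ.ord →
        ∃ r : P, r ≤ q ∧ ∃ β : Ordinal, η ≤ β ∧ β < κ.ord ∧ r ≤ p β := by
  by_contra! hcon
  have : Nonempty P := ⟨p 0⟩
  choose! q hqp η hη hbad using hcon
  have hcc' (A : Set P) (hA : IsStrongAntichain (· ≥ ·) A) : #A < κ :=
    hcc A fun a ha b hb hab ⟨r, hra, hrb⟩ => (hA ha hb hab r).elim (· hra) (· hrb)
  obtain ⟨α, hα, β, hηβ, hβ, r, hrα, hrβ⟩ :=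
    exists_compatible_of_isRegular hκreg hcc' q η hη
  exact hbad α hα r hrα β hηβ hβ (hrβ.trans (hqp β hβ))

/-- Let `κ` be regular uncountable, `P` a `κ`-cc forcing poset, and `(p α)_{α<κ}` a
sequence of conditions.  Then some `p α` forces (in the sense of the forcing relation,
rendered here by its density unfolding) that `{β < κ : p β ∈ Ġ}` is unbounded in `κ`:
below every `q ≤ p α` and above every `η < κ` there are `r ≤ q` and `β` with
`η ≤ β < κ` and `r ≤ p β` (so that `r` forces `p β ∈ Ġ`). -/
theorem stmt0 {P : Type} [Preorder P]
    (κ : Cardinal) (hκreg : κ.IsRegular) (hκunc : Cardinal.aleph0 < κ)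
    (hcc : ∀ A : Set P,
      (∀ p ∈ A, ∀ q ∈ A, p ≠ q → ¬ ∃ r : P, r ≤ p ∧ r ≤ q) → Cardinal.mk A < κ)
    (p : Ordinal → P) :
    ∃ α : Ordinal, α < κ.ord ∧
      ∀ q : P, q ≤ p α → ∀ η : Ordinal, η < κ.ord →
        ∃ r : P, r ≤ q ∧ ∃ β : Ordinal, η ≤ β ∧ β < κ.ord ∧ r ≤ p β :=
  stmt0_general κ hκreg hcc p
end

section
/- Let κ be regular and uncountable. If the product forcing P × P satisfies the κ-chain condition, then forcing with P cannot add a cofinal branch through any tree of height κ lying in the ground model. -/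
/-!
Work below a condition `p`. If some `q ≤ p` decides the value of the branch at every level, the
decided values form a branch in the ground model. Otherwise every `q ≤ p` has two extensions
forcing different nodes at some level, so for every level `η` there is a pair of conditions forcing
the same node at `η` but different nodes at some level `α(η) < κ`. Regularity of `κ` lets us pick
levels `η_ξ` (`ξ < κ`) with `α(η_ζ) < η_ξ` for `ζ < ξ`. A common extension in `P × P` of the pairs
chosen at `η_ζ` and `η_ξ` would force two distinct nodes at level `α(η_ζ)` below a single node at
level `η_ξ`, which is impossible in a tree. So these `κ` pairs form an antichain of `P × P`.
-/

open Cardinal Set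

theorem exists_map_lt_map_of_mk_Iio_lt_cof {α : Type*} [LinearOrder α] [WellFoundedLT α]
    (hα : ∀ x : α, #(Iio x) < Order.cof α) (f : α → α) :
    ∃ B : α → α, ∀ ζ ξ, ζ < ξ → f (B ζ) < B ξ := by
  have hbdd : ∀ (ξ : α) (g : Iio ξ → α), ∃ x, ∀ ζ, g ζ < x := by
    intro ξ g
    have hg : ¬ IsCofinal (range g) := fun h =>
      ((Order.cof_le h).trans mk_range_le).not_gt (hα ξ)
    simpa [IsCofinal] using hg
  choose up hup using hbdd
  let B : α → α := wellFounded_lt.fix fun ξ IH => up ξ fun ζ => f (IH ζ.1 ζ.2)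
  refine ⟨B, fun ζ ξ h => ?_⟩
  rw [show B ξ = up ξ fun η => f (B η) from WellFounded.fix_eq _ _ ξ]
  exact hup ξ (fun η => f (B η)) ⟨ζ, h⟩

theorem Cardinal.IsRegular.mk_Iio_lt_cof_toType {κ : Cardinal} (hκ : κ.IsRegular)
    (x : κ.ord.ToType) : #(Iio x) < Order.cof κ.ord.ToType := by
  rw [Ordinal.cof_toType, hκ.cof_ord]
  simpa using mk_Iio_lt x

theorem incompatible_range_of_incompatible {ι α : Type*} [LinearOrder ι] [Preorder α]
    {F : ι → α} (hF : ∀ i j, i < j → ¬ ∃ r, r ≤ F i ∧ r ≤ F j) :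
    ∀ a ∈ range F, ∀ b ∈ range F, a ≠ b → ¬ ∃ r, r ≤ a ∧ r ≤ b := by
  rintro _ ⟨i, rfl⟩ _ ⟨j, rfl⟩ hne
  rcases lt_trichotomy i j with h | rfl | h
  · exact hF i j h
  · exact absurd rfl hne
  · rintro ⟨r, hri, hrj⟩
    exact hF j i h ⟨r, hrj, hri⟩

theorem injective_of_incompatible {ι α : Type*} [LinearOrder ι] [Preorder α]
    {F : ι → α} (hF : ∀ i j, i < j → ¬ ∃ r, r ≤ F i ∧ r ≤ F j) : F.Injective := by
  intro i j hij
  by_contra hne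
  rcases lt_or_gt_of_ne hne with h | h
  · exact hF i j h ⟨F i, le_rfl, hij.le⟩
  · exact hF j i h ⟨F i, hij.le, le_rfl⟩

section Branch

-- `v p α t` encodes `p ⊩ ḃ(α) = t` for a name `ḃ` of a branch through the tree `(T, lev)`.
variable {P T : Type*} [Preorder P] {lev : T → Ordinal} {v : P → Ordinal → T → Prop}

theorem eq_of_le_of_lev_eq [PartialOrder T]
    (htree : ∀ t : T, ∀ α ≤ lev t, ∃! s : T, s ≤ t ∧ lev s = α)
    {s₁ s₂ w : T} (h₁ : s₁ ≤ w) (h₂ : s₂ ≤ w) (hlev : lev s₁ = lev s₂) (hle : lev s₁ ≤ lev w) :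
    s₁ = s₂ :=
  (htree w _ hle).unique ⟨h₁, rfl⟩ ⟨h₂, hlev.symm⟩

def DecidesBranch (v : P → Ordinal → T → Prop) (c : Ordinal) (q : P) : Prop :=
  ∀ α < c, ∀ r₁ ≤ q, ∀ r₂ ≤ q, ∀ t₁ t₂, v r₁ α t₁ → v r₂ α t₂ → t₁ = t₂

def AgreeAt (v : P → Ordinal → T → Prop) (u : P × P) (η : Ordinal) : Prop :=
  ∃ w, v u.1 η w ∧ v u.2 η w

def SplitAt (v : P → Ordinal → T → Prop) (u : P × P) (α : Ordinal) : Prop :=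
  ∃ t₀ t₁, t₀ ≠ t₁ ∧ v u.1 α t₀ ∧ v u.2 α t₁

theorem exists_branch_of_decidesBranch [PartialOrder T] [Nonempty T] {c : Ordinal} {q : P}
    (hmono : ∀ {p q : P} {α : Ordinal} {t : T}, q ≤ p → v p α t → v q α t)
    (hlevel : ∀ p α t, v p α t → lev t = α)
    (hcoh : ∀ p α β s t, v p α s → v p β t → α ≤ β → s ≤ t)
    (htotal : ∀ p : P, ∀ α < c, ∃ q ≤ p, ∃ t, v q α t) (hq : DecidesBranch v c q) :
    ∃ g : Ordinal → T,
      (∀ α < c, lev (g α) = α) ∧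
      (∀ α β : Ordinal, α ≤ β → β < c → g α ≤ g β) ∧
      (∀ α < c, ∀ r ≤ q, ∀ t, v r α t → t = g α) := by
  let g α := Classical.epsilon fun t => ∃ r ≤ q, v r α t
  have hg : ∀ α < c, ∃ r ≤ q, v r α (g α) := fun α hα =>
    Classical.epsilon_spec (p := fun t => ∃ r ≤ q, v r α t)
      (let ⟨r, hr, t, ht⟩ := htotal q α hα; ⟨t, r, hr, ht⟩)
  have hforced : ∀ α < c, ∀ r ≤ q, ∀ t, v r α t → t = g α := fun α hα r hr t ht =>
    let ⟨r', hr', ht'⟩ := hg α hα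
    hq α hα r hr r' hr' t (g α) ht ht'
  refine ⟨g, fun α hα => ?_, fun α β hαβ hβ => ?_, hforced⟩
  · obtain ⟨r, -, hr⟩ := hg α hα
    exact hlevel r α _ hr
  · obtain ⟨r, hrq, hr⟩ := hg β hβ
    obtain ⟨r', hr'r, t, ht⟩ := htotal r α (hαβ.trans_lt hβ)
    rw [← hforced α (hαβ.trans_lt hβ) r' (hr'r.trans hrq) t ht]
    exact hcoh r' α β t (g β) ht (hmono hr'r hr) hαβ

theorem not_compatible_of_splitAt_of_agreeAt [PartialOrder T]
    (htree : ∀ t : T, ∀ α ≤ lev t, ∃! s : T, s ≤ t ∧ lev s = α)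
    (hmono : ∀ {p q : P} {α : Ordinal} {t : T}, q ≤ p → v p α t → v q α t)
    (hlevel : ∀ p α t, v p α t → lev t = α)
    (hcoh : ∀ p α β s t, v p α s → v p β t → α ≤ β → s ≤ t)
    {u u' : P × P} {α η : Ordinal} (hu : SplitAt v u α) (hu' : AgreeAt v u' η) (hαη : α ≤ η) :
    ¬ ∃ r, r ≤ u ∧ r ≤ u' := by
  rintro ⟨r, hr, hr'⟩
  obtain ⟨t₀, t₁, hne, ht₀, ht₁⟩ := hu
  obtain ⟨w, hw₀, hw₁⟩ := hu'
  have hlev₀ := hlevel _ _ _ ht₀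
  have hle₀ : t₀ ≤ w := hcoh r.1 α η t₀ w (hmono hr.1 ht₀) (hmono hr'.1 hw₀) hαη
  have hle₁ : t₁ ≤ w := hcoh r.2 α η t₁ w (hmono hr.2 ht₁) (hmono hr'.2 hw₁) hαη
  refine hne (eq_of_le_of_lev_eq htree hle₀ hle₁ (hlev₀.trans (hlevel _ _ _ ht₁).symm) ?_)
  rw [hlev₀, hlevel _ _ _ hw₀]
  exact hαη

theorem exists_agreeAt_splitAt {c : Ordinal} {p : P}
    (hmono : ∀ {p q : P} {α : Ordinal} {t : T}, q ≤ p → v p α t → v q α t)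
    (htotal : ∀ p : P, ∀ α < c, ∃ q ≤ p, ∃ t, v q α t)
    (hsplit : ∀ q ≤ p, ¬ DecidesBranch v c q) {η : Ordinal} (hη : η < c) :
    ∃ u : P × P, AgreeAt v u η ∧ ∃ α < c, SplitAt v u α := by
  obtain ⟨q, hqp, w, hw⟩ := htotal p η hη
  have hq := hsplit q hqp
  simp only [DecidesBranch, not_forall] at hq
  obtain ⟨α, hα, r₀, hr₀, r₁, hr₁, t₀, t₁, ht₀, ht₁, hne⟩ := hq
  exact ⟨(r₀, r₁), ⟨w, hmono hr₀ hw, hmono hr₁ hw⟩, α, hα, t₀, t₁, hne, ht₀, ht₁⟩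

theorem exists_decidesBranch [PartialOrder T] {κ : Cardinal} (hκ : κ.IsRegular)
    (hcc : ∀ A : Set (P × P),
      (∀ p ∈ A, ∀ q ∈ A, p ≠ q → ¬ ∃ r : P × P, r ≤ p ∧ r ≤ q) → #A < κ)
    (htree : ∀ t : T, ∀ α ≤ lev t, ∃! s : T, s ≤ t ∧ lev s = α)
    (hmono : ∀ {p q : P} {α : Ordinal} {t : T}, q ≤ p → v p α t → v q α t)
    (hlevel : ∀ p α t, v p α t → lev t = α)
    (hcoh : ∀ p α β s t, v p α s → v p β t → α ≤ β → s ≤ t)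
    (htotal : ∀ p : P, ∀ α < κ.ord, ∃ q ≤ p, ∃ t, v q α t) (p : P) :
    ∃ q ≤ p, DecidesBranch v κ.ord q := by
  by_contra! hsplit
  have hstep (x : κ.ord.ToType) :
      ∃ u : P × P, ∃ y : κ.ord.ToType, AgreeAt v u x ∧ SplitAt v u y := by
    obtain ⟨u, hagree, α, hα, hsplitα⟩ :=
      exists_agreeAt_splitAt @hmono htotal hsplit (mem_Iio.1 x.toOrd.2)
    refine ⟨u, Ordinal.ToType.mk ⟨α, hα⟩, hagree, ?_⟩
    simpa using hsplitα
  choose u next hu using hstep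
  obtain ⟨B, hB⟩ := exists_map_lt_map_of_mk_Iio_lt_cof hκ.mk_Iio_lt_cof_toType next
  have hinc : ∀ ζ ξ, ζ < ξ → ¬ ∃ r, r ≤ u (B ζ) ∧ r ≤ u (B ξ) := fun ζ ξ h =>
    not_compatible_of_splitAt_of_agreeAt htree @hmono hlevel hcoh (hu (B ζ)).2 (hu (B ξ)).1
      (Ordinal.ToType.mk.symm.le_iff_le.2 (hB ζ ξ h).le)
  have hcard := hcc _ (incompatible_range_of_incompatible hinc)
  rw [mk_range_eq _ (injective_of_incompatible hinc), mk_ord_toType] at hcard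
  exact hcard.false

end Branch

theorem stmt1_general {P T : Type} [Preorder P] [PartialOrder T]
    (κ : Cardinal) (hκreg : κ.IsRegular)
    (hcc : ∀ A : Set (P × P),
      (∀ p ∈ A, ∀ q ∈ A, p ≠ q → ¬ ∃ r : P × P, r ≤ p ∧ r ≤ q) → Cardinal.mk A < κ)
    (lev : T → Ordinal)
    (htree : ∀ t : T, ∀ α ≤ lev t, ∃! s : T, s ≤ t ∧ lev s = α)
    (v : P → Ordinal → T → Prop)
    (hmono : ∀ {p q : P} {α : Ordinal} {t : T}, q ≤ p → v p α t → v q α t)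
    (hlevel : ∀ p α t, v p α t → lev t = α)
    (hcoh : ∀ p α β s t, v p α s → v p β t → α ≤ β → s ≤ t)
    (htotal : ∀ p : P, ∀ α < κ.ord, ∃ q ≤ p, ∃ t, v q α t) :
    ∀ p : P, ∃ q ≤ p, ∃ g : Ordinal → T,
      (∀ α < κ.ord, lev (g α) = α) ∧
      (∀ α β : Ordinal, α ≤ β → β < κ.ord → g α ≤ g β) ∧
      (∀ α < κ.ord, ∀ r ≤ q, ∀ t, v r α t → t = g α) := by
  intro p
  obtain ⟨q, hqp, hq⟩ := exists_decidesBranch hκreg hcc htree @hmono hlevel hcoh htotal p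
  obtain ⟨-, -, t, -⟩ := htotal p 0 (Cardinal.ord_pos.2 hκreg.pos)
  have : Nonempty T := ⟨t⟩
  exact ⟨q, hqp, exists_branch_of_decidesBranch @hmono hlevel hcoh htotal hq⟩

/-- Let `κ` be regular uncountable and suppose `P × P` is `κ`-cc.  Then forcing with `P`
cannot add a cofinal branch through a ground-model tree `T` of height `κ`.  The tree is
given with a level function `lev` into the ordinals below `κ`, and a `P`-name `ḃ` for a
cofinal branch of `T` is rendered by a relation `v p α t` ("`p` forces `ḃ(α) = t`")
satisfying the evident coherence axioms.  The conclusion states that the branch is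
(densely) forced to coincide with a branch `g` lying in the ground model. -/
theorem stmt1 {P T : Type} [Preorder P] [PartialOrder T]
    (κ : Cardinal) (hκreg : κ.IsRegular) (hκunc : Cardinal.aleph0 < κ)
    (hcc : ∀ A : Set (P × P),
      (∀ p ∈ A, ∀ q ∈ A, p ≠ q → ¬ ∃ r : P × P, r ≤ p ∧ r ≤ q) → Cardinal.mk A < κ)
    (lev : T → Ordinal) (hlev : ∀ t, lev t < κ.ord)
    (htree : ∀ t : T, ∀ α ≤ lev t, ∃! s : T, s ≤ t ∧ lev s = α)
    (v : P → Ordinal → T → Prop)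
    (hmono : ∀ {p q : P} {α : Ordinal} {t : T}, q ≤ p → v p α t → v q α t)
    (hlevel : ∀ p α t, v p α t → lev t = α)
    (hcoh : ∀ p α β s t, v p α s → v p β t → α ≤ β → s ≤ t)
    (htotal : ∀ p : P, ∀ α < κ.ord, ∃ q ≤ p, ∃ t, v q α t) :
    ∀ p : P, ∃ q ≤ p, ∃ g : Ordinal → T,
      (∀ α < κ.ord, lev (g α) = α) ∧
      (∀ α β : Ordinal, α ≤ β → β < κ.ord → g α ≤ g β) ∧
      (∀ α < κ.ord, ∀ r ≤ q, ∀ t, v r α t → t = g α) :=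
  stmt1_general κ hκreg hcc lev htree v hmono hlevel hcoh htotal
end

section
/- Let P be a forcing poset forcing that λ is a regular uncountable cardinal, and suppose P forces that Q̇ is <λ-closed. Then the term forcing A(P,Q̇) is <λ-closed. -/
/-- If `P` forces `λ` to be regular uncountable and forces the named poset `Q̇`
(presented by its names `τ` and the forced order `fle`) to be `<λ`-closed, then the
term forcing `A(P,Q̇)` — that is, `τ` ordered by `a ≤ b ↔ ∀ p, fle p a b` — is
`<λ`-closed: every decreasing sequence of names of length `< λ` has a lower bound. -/
theorem stmt5 {P τ : Type} [Preorder P]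
    (lam : Cardinal) (hreg : lam.IsRegular) (hunc : Cardinal.aleph0 < lam)
    (fle : P → τ → τ → Prop)
    (hmono : ∀ {p q : P} {a b : τ}, q ≤ p → fle p a b → fle q a b)
    (hrefl : ∀ (p : P) (a : τ), fle p a a)
    (htrans : ∀ {p : P} {a b c : τ}, fle p a b → fle p b c → fle p a c)
    (hdense : ∀ {q : P} {a b : τ}, (∀ r ≤ q, ∃ s ≤ r, fle s a b) → fle q a b)
    (hmix : ∀ A : Set P,
      (∀ p ∈ A, ∀ q ∈ A, p ≠ q → ¬ ∃ r : P, r ≤ p ∧ r ≤ q) →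
      (∀ p : P, ∃ a ∈ A, ∃ r : P, r ≤ p ∧ r ≤ a) →
      ∀ g : P → τ, ∃ c : τ, ∀ a ∈ A, fle a c (g a) ∧ fle a (g a) c)
    -- `P` forces that `Q̇` is `<λ`-closed:
    (hclosed : ∀ (p : P) (o : Ordinal), o < lam.ord → ∀ f : Ordinal → τ,
      (∀ i j, i ≤ j → j < o → fle p (f j) (f i)) →
      ∃ b : τ, ∀ i < o, fle p b (f i)) :
    -- the term forcing `A(P,Q̇)` is `<λ`-closed:
    ∀ (o : Ordinal), o < lam.ord → ∀ f : Ordinal → τ,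
      (∀ i j, i ≤ j → j < o → ∀ p, fle p (f j) (f i)) →
      ∃ b : τ, ∀ i < o, ∀ p, fle p b (f i) := by
  intro o ho f hf
  -- a maximal antichain
  obtain ⟨A, hA⟩ := zorn_subset
      {A : Set P | ∀ p ∈ A, ∀ q ∈ A, p ≠ q → ¬ ∃ r : P, r ≤ p ∧ r ≤ q}
      (by
        intro c hc hchain
        refine ⟨⋃₀ c, ?_, fun s hs => Set.subset_sUnion_of_mem hs⟩
        rintro p ⟨s, hs, hps⟩ q ⟨t, ht, hqt⟩ hpq
        rcases hchain.total hs ht with hst | hts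
        · exact hc ht p (hst hps) q hqt hpq
        · exact hc hs p hps q (hts hqt) hpq)
  have hanti : ∀ p ∈ A, ∀ q ∈ A, p ≠ q → ¬ ∃ r : P, r ≤ p ∧ r ≤ q := hA.prop
  -- maximality gives predensity
  have hpre : ∀ p : P, ∃ a ∈ A, ∃ r : P, r ≤ p ∧ r ≤ a := by
    intro p
    by_contra hcon
    push_neg at hcon
    have hpA : p ∉ A := fun hp => hcon p hp p le_rfl le_rfl
    have : insert p A ∈ {A : Set P | ∀ p ∈ A, ∀ q ∈ A, p ≠ q → ¬ ∃ r : P, r ≤ p ∧ r ≤ q} := by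
      rintro x (rfl | hx) y (rfl | hy) hxy
      · exact absurd rfl hxy
      · rintro ⟨r, hr1, hr2⟩; exact hcon y hy r hr1 hr2
      · rintro ⟨r, hr1, hr2⟩; exact hcon x hx r hr2 hr1
      · exact hanti x hx y hy hxy
    have := hA.eq_of_subset this (Set.subset_insert p A)
    exact hpA (this ▸ Set.mem_insert p A)
  -- for each p, a lower bound b_p below p
  have hbp : ∀ p : P, ∃ b : τ, ∀ i < o, fle p b (f i) := by
    intro p
    exact hclosed p o ho f (fun i j hij hj => hf i j hij hj p)
  choose g hg using hbp
  obtain ⟨c, hc⟩ := hmix A hanti hpre g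
  refine ⟨c, fun i hi q => ?_⟩
  refine hdense (fun r hr => ?_)
  obtain ⟨a, haA, s, hsr, hsa⟩ := hpre r
  refine ⟨s, hsr, htrans (hmono hsa (hc a haA).1) (hmono hsa (hg a i hi))⟩
end
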